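/- Let n ≥ 1 be an integer. There exist constants c, C > 0, depending only on n, such that for every pair (ℓ, ℓ') ∈ ℕ² with (ℓ, ℓ') ≠ (0, 0), one has c · λ_{ℓ,ℓ'}^{n−1} (ℓ + ℓ') ≤ d_{ℓ,ℓ'} ≤ C · λ_{ℓ,ℓ'}^{n−1} (ℓ + ℓ'). -/
import Mathlib


lemma nat_low (ℓ k : ℕ) : ℓ^k ≤ k.factorial * ((ℓ+k-1).choose k) := by
  rw [← Nat.ascFactorial_eq_factorial_mul_choose']
  exact Nat.pow_succ_le_ascFactorial ℓ k

lemma nat_high (ℓ k : ℕ) (h : 1 ≤ ℓ) : k.factorial * ((ℓ+k-1).choose k) ≤ ((k+1)*ℓ)^k := by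
  rw [← Nat.ascFactorial_eq_factorial_mul_choose']
  calc ℓ.ascFactorial k = ((ℓ-1)+1).ascFactorial k := by congr 1; omega
    _ ≤ ((ℓ-1)+k)^k := Nat.ascFactorial_le_pow_add _ _
    _ ≤ ((k+1)*ℓ)^k := by
        apply Nat.pow_le_pow_left
        have h1 : k * 1 ≤ k * ℓ := Nat.mul_le_mul_left k h
        have h2 : (k+1)*ℓ = k*ℓ + ℓ := by ring
        omega

lemma r_low (ℓ k : ℕ) : (ℓ:ℝ)^k ≤ (k.factorial:ℝ) * ((ℓ+k-1).choose k : ℝ) := by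
  exact_mod_cast nat_low ℓ k

lemma r_high (ℓ k : ℕ) (h : 1 ≤ ℓ) :
    (k.factorial:ℝ) * ((ℓ+k-1).choose k : ℝ) ≤ ((k:ℝ)+1)^k * (ℓ:ℝ)^k := by
  have h2 := nat_high ℓ k h
  have : (((k+1)*ℓ)^k : ℕ) = (((k:ℝ)+1)^k * (ℓ:ℝ)^k : ℝ) := by push_cast [mul_pow]; ring
  calc (k.factorial:ℝ) * ((ℓ+k-1).choose k : ℝ) ≤ ((((k+1)*ℓ)^k : ℕ) : ℝ) := by exact_mod_cast h2
    _ = _ := this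

lemma axis_low (k m : ℕ) (hm : 1 ≤ m) :
    (((k:ℝ)+1)^k * (((k+1).factorial:ℕ):ℝ))⁻¹ * ((((k+1)*m : ℕ):ℕ):ℝ)^k * (m:ℝ)
      ≤ ((m + (k+1)).choose m : ℝ) := by
  have hsymm : (m + (k+1)).choose m = (m + (k+1)).choose (k+1) := Nat.choose_symm_add
  rw [hsymm]
  have hlow := r_low (m+1) (k+1)
  rw [show (m+1)+(k+1)-1 = m+(k+1) by omega] at hlow
  have hF : (0:ℝ) < ((k+1).factorial : ℝ) := by positivity
  have hy : (1:ℝ) ≤ (m:ℝ) := by exact_mod_cast hm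
  have hcast : ((((k+1)*m : ℕ):ℕ):ℝ) = (((k:ℝ)+1)*(m:ℝ)) := by push_cast; ring
  rw [hcast, mul_pow]
  have hk1 : (0:ℝ) < ((k:ℝ)+1)^k := by positivity
  rw [mul_inv]
  have key : (m:ℝ)^(k+1) ≤ ((k+1).factorial : ℝ) * ((m + (k+1)).choose (k+1) : ℝ) := by
    refine le_trans ?_ hlow
    apply pow_le_pow_left₀ (by positivity)
    push_cast; linarith
  calc (((k:ℝ)+1)^k)⁻¹ * (((k+1).factorial:ℝ))⁻¹ * (((k:ℝ)+1)^k * (m:ℝ)^k) * (m:ℝ)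
      = (((k+1).factorial:ℝ))⁻¹ * ((m:ℝ)^k * (m:ℝ)) := by field_simp
    _ = (((k+1).factorial:ℝ))⁻¹ * (m:ℝ)^(k+1) := by rw [pow_succ]
    _ ≤ (((k+1).factorial:ℝ))⁻¹ * (((k+1).factorial : ℝ) * ((m + (k+1)).choose (k+1) : ℝ)) := by
        apply mul_le_mul_of_nonneg_left key (by positivity)
    _ = ((m + (k+1)).choose (k+1) : ℝ) := by field_simp

lemma axis_high (k m : ℕ) (hm : 1 ≤ m) :
    ((m + (k+1)).choose m : ℝ)
      ≤ 2^(k+1)*((k:ℝ)+2)^(k+1) * ((((k+1)*m : ℕ):ℕ):ℝ)^k * (m:ℝ) := by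
  have hsymm : (m + (k+1)).choose m = (m + (k+1)).choose (k+1) := Nat.choose_symm_add
  rw [hsymm]
  have hhigh := r_high (m+1) (k+1) (by omega)
  rw [show (m+1)+(k+1)-1 = m+(k+1) by omega] at hhigh
  push_cast at hhigh
  have hF : (1:ℝ) ≤ ((k+1).factorial : ℝ) := by
    exact_mod_cast Nat.one_le_iff_ne_zero.mpr (Nat.factorial_ne_zero _)
  have hy : (1:ℝ) ≤ (m:ℝ) := by exact_mod_cast hm
  have hk0 : (0:ℝ) ≤ (k:ℝ) := Nat.cast_nonneg k
  have hcast : ((((k+1)*m : ℕ):ℕ):ℝ) = (((k:ℝ)+1)*(m:ℝ)) := by push_cast; ring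
  have hD : (0:ℝ) ≤ ((m + (k+1)).choose (k+1) : ℝ) := by positivity
  calc ((m + (k+1)).choose (k+1) : ℝ)
      ≤ ((k+1).factorial : ℝ) * ((m + (k+1)).choose (k+1) : ℝ) := le_mul_of_one_le_left hD hF
    _ ≤ ((k:ℝ)+1+1)^(k+1) * ((m:ℝ)+1)^(k+1) := hhigh
    _ ≤ ((k:ℝ)+1+1)^(k+1) * (2*(m:ℝ))^(k+1) := by
        refine mul_le_mul_of_nonneg_left (pow_le_pow_left₀ (by linarith) (by linarith) _) (by positivity)
    _ = 2^(k+1)*((k:ℝ)+2)^(k+1) * ((m:ℝ)^k * (m:ℝ)) := by ring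
    _ ≤ 2^(k+1)*((k:ℝ)+2)^(k+1) * ((((k:ℝ)+1)*(m:ℝ))^k * (m:ℝ)) := by
        have hmm : (m:ℝ) ≤ ((k:ℝ)+1)*(m:ℝ) := le_mul_of_one_le_left (by linarith) (by linarith)
        have h1 : (m:ℝ)^k ≤ (((k:ℝ)+1)*(m:ℝ))^k := pow_le_pow_left₀ (by linarith) hmm k
        exact mul_le_mul_of_nonneg_left (mul_le_mul_of_nonneg_right h1 (by linarith)) (by positivity)
    _ = _ := by rw [hcast]; ring

lemma interior_low (k ℓ ℓ' : ℕ) (hℓ : 1 ≤ ℓ) (hℓ' : 1 ≤ ℓ') :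
    ((k:ℝ)+1) / (((k+1).factorial:ℝ)^2 * (2^k*((k:ℝ)+2)^k)) *
      ((2*ℓ*ℓ' + (k+1)*(ℓ+ℓ') : ℕ):ℝ)^k * ((ℓ+ℓ' :ℕ):ℝ)
    ≤ ((k:ℝ)+1) * (((ℓ:ℝ) + (ℓ':ℝ) + ((k:ℝ)+1)) / ((ℓ:ℝ)*(ℓ':ℝ))) *
      ((ℓ + k).choose (ℓ-1) : ℝ) * ((ℓ' + k).choose (ℓ'-1) : ℝ) := by
  have hx : (1:ℝ) ≤ (ℓ:ℝ) := by exact_mod_cast hℓ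
  have hy : (1:ℝ) ≤ (ℓ':ℝ) := by exact_mod_cast hℓ'
  have hk0 : (0:ℝ) ≤ (k:ℝ) := Nat.cast_nonneg k
  set x := (ℓ:ℝ); set y := (ℓ':ℝ)
  have hx0 : (0:ℝ) < x := by linarith
  have hy0 : (0:ℝ) < y := by linarith
  have hBsym : (ℓ + k).choose (ℓ-1) = (ℓ + k).choose (k+1) := by
    rw [← Nat.choose_symm (by omega : ℓ-1 ≤ ℓ+k), show (ℓ+k)-(ℓ-1) = k+1 by omega]
  have hBsym' : (ℓ' + k).choose (ℓ'-1) = (ℓ' + k).choose (k+1) := by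
    rw [← Nat.choose_symm (by omega : ℓ'-1 ≤ ℓ'+k), show (ℓ'+k)-(ℓ'-1) = k+1 by omega]
  rw [hBsym, hBsym']
  set F : ℝ := ((k+1).factorial : ℝ) with hFdef
  have hF : (0:ℝ) < F := by positivity
  set B : ℝ := ((ℓ + k).choose (k+1) : ℝ) with hBdef
  set B' : ℝ := ((ℓ' + k).choose (k+1) : ℝ) with hB'def
  have hB0 : 0 ≤ B := by positivity
  have hB0' : 0 ≤ B' := by positivity
  have hBlow : x^(k+1) ≤ F * B := by
    have := r_low ℓ (k+1); rwa [show ℓ+(k+1)-1 = ℓ+k by omega] at this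
  have hBlow' : y^(k+1) ≤ F * B' := by
    have := r_low ℓ' (k+1); rwa [show ℓ'+(k+1)-1 = ℓ'+k by omega] at this
  set L : ℝ := ((2*ℓ*ℓ' + (k+1)*(ℓ+ℓ') : ℕ):ℝ) with hLdef
  have hLcast : L = 2*x*y + ((k:ℝ)+1)*(x+y) := by rw [hLdef]; push_cast; ring
  have hScast : ((ℓ+ℓ' :ℕ):ℝ) = x + y := by push_cast; ring
  rw [hScast]
  have hL0 : 0 ≤ L := by rw [hLcast]; nlinarith
  have hLk : L^k ≤ 2^k*((k:ℝ)+2)^k*(x*y)^k := by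
    calc L^k ≤ (2*((k:ℝ)+2)*(x*y))^k := by
          apply pow_le_pow_left₀ hL0
          rw [hLcast]; nlinarith [(mul_nonneg (sub_nonneg.mpr hx) (sub_nonneg.mpr hy) : 0 ≤ (x-1)*(y-1))]
      _ = 2^k*((k:ℝ)+2)^k*(x*y)^k := by rw [show 2*((k:ℝ)+2)*(x*y) = (2*((k:ℝ)+2))*(x*y) by ring, mul_pow, mul_pow]
  -- reduce to polynomial inequality
  have hR : ((k:ℝ)+1) * ((x + y + ((k:ℝ)+1)) / (x*y)) * B * B'
      = (((k:ℝ)+1) * (x + y + ((k:ℝ)+1)) * B * B') / (x*y) := by ring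
  rw [hR, le_div_iff₀ (by positivity)]
  have hc2 : ((k:ℝ)+1) / (F^2 * (2^k*((k:ℝ)+2)^k)) * (2^k*((k:ℝ)+2)^k) = ((k:ℝ)+1)/F^2 := by
    field_simp
  calc ((k:ℝ)+1) / (F^2 * (2^k*((k:ℝ)+2)^k)) * L^k * (x+y) * (x*y)
      ≤ ((k:ℝ)+1) / (F^2 * (2^k*((k:ℝ)+2)^k)) * (2^k*((k:ℝ)+2)^k*(x*y)^k) * (x+y) * (x*y) := by
        have hc0 : 0 ≤ ((k:ℝ)+1) / (F^2 * (2^k*((k:ℝ)+2)^k)) := by positivity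
        gcongr
    _ = ((k:ℝ)+1) * (x^(k+1)/F) * (y^(k+1)/F) * (x+y) := by
        rw [pow_succ x k, pow_succ y k, mul_pow x y k]; field_simp
    _ ≤ ((k:ℝ)+1) * B * B' * (x+y) := by
        have h1 : x^(k+1)/F ≤ B := by rw [div_le_iff₀ hF]; linarith
        have h2 : y^(k+1)/F ≤ B' := by rw [div_le_iff₀ hF]; linarith
        have hp1 : 0 ≤ x^(k+1)/F := by positivity
        have hp2 : 0 ≤ y^(k+1)/F := by positivity
        gcongr
    _ ≤ ((k:ℝ)+1) * (x + y + ((k:ℝ)+1)) * B * B' := by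
        have : ((k:ℝ)+1) * B * B' * (x+y) = ((k:ℝ)+1) * (x+y) * B * B' := by ring
        rw [this]
        have h3 : (k:ℝ)+1 ≥ 0 := by positivity
        exact mul_le_mul_of_nonneg_right (mul_le_mul_of_nonneg_right (mul_le_mul_of_nonneg_left (by linarith) h3) hB0) hB0'

lemma interior_high (k ℓ ℓ' : ℕ) (hℓ : 1 ≤ ℓ) (hℓ' : 1 ≤ ℓ') :
    ((k:ℝ)+1) * (((ℓ:ℝ) + (ℓ':ℝ) + ((k:ℝ)+1)) / ((ℓ:ℝ)*(ℓ':ℝ))) *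
      ((ℓ + k).choose (ℓ-1) : ℝ) * ((ℓ' + k).choose (ℓ'-1) : ℝ)
    ≤ (((k:ℝ)+1) * ((k:ℝ)+2)^(2*k+3)) *
      ((2*ℓ*ℓ' + (k+1)*(ℓ+ℓ') : ℕ):ℝ)^k * ((ℓ+ℓ' :ℕ):ℝ) := by
  have hx : (1:ℝ) ≤ (ℓ:ℝ) := by exact_mod_cast hℓ
  have hy : (1:ℝ) ≤ (ℓ':ℝ) := by exact_mod_cast hℓ'
  have hk0 : (0:ℝ) ≤ (k:ℝ) := Nat.cast_nonneg k
  set x := (ℓ:ℝ); set y := (ℓ':ℝ)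
  have hx0 : (0:ℝ) < x := by linarith
  have hy0 : (0:ℝ) < y := by linarith
  have hBsym : (ℓ + k).choose (ℓ-1) = (ℓ + k).choose (k+1) := by
    rw [← Nat.choose_symm (by omega : ℓ-1 ≤ ℓ+k), show (ℓ+k)-(ℓ-1) = k+1 by omega]
  have hBsym' : (ℓ' + k).choose (ℓ'-1) = (ℓ' + k).choose (k+1) := by
    rw [← Nat.choose_symm (by omega : ℓ'-1 ≤ ℓ'+k), show (ℓ'+k)-(ℓ'-1) = k+1 by omega]
  rw [hBsym, hBsym']
  set F : ℝ := ((k+1).factorial : ℝ) with hFdef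
  have hF : (1:ℝ) ≤ F := by
    rw [hFdef]; exact_mod_cast Nat.one_le_iff_ne_zero.mpr (Nat.factorial_ne_zero _)
  set B : ℝ := ((ℓ + k).choose (k+1) : ℝ) with hBdef
  set B' : ℝ := ((ℓ' + k).choose (k+1) : ℝ) with hB'def
  have hB0 : 0 ≤ B := by positivity
  have hB0' : 0 ≤ B' := by positivity
  have hBhigh : B ≤ ((k:ℝ)+2)^(k+1) * x^(k+1) := by
    have h1 := r_high ℓ (k+1) hℓ
    rw [show ℓ+(k+1)-1 = ℓ+k by omega] at h1
    push_cast at h1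
    calc B ≤ F * B := le_mul_of_one_le_left hB0 hF
      _ ≤ ((k:ℝ)+1+1)^(k+1) * x^(k+1) := h1
      _ = ((k:ℝ)+2)^(k+1) * x^(k+1) := by ring_nf
  have hBhigh' : B' ≤ ((k:ℝ)+2)^(k+1) * y^(k+1) := by
    have h1 := r_high ℓ' (k+1) hℓ'
    rw [show ℓ'+(k+1)-1 = ℓ'+k by omega] at h1
    push_cast at h1
    calc B' ≤ F * B' := le_mul_of_one_le_left hB0' hF
      _ ≤ ((k:ℝ)+1+1)^(k+1) * y^(k+1) := h1
      _ = ((k:ℝ)+2)^(k+1) * y^(k+1) := by ring_nf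
  set L : ℝ := ((2*ℓ*ℓ' + (k+1)*(ℓ+ℓ') : ℕ):ℝ) with hLdef
  have hLcast : L = 2*x*y + ((k:ℝ)+1)*(x+y) := by rw [hLdef]; push_cast; ring
  have hScast : ((ℓ+ℓ' :ℕ):ℝ) = x + y := by push_cast; ring
  rw [hScast]
  have hLk : (x*y)^k ≤ L^k := by
    apply pow_le_pow_left₀ (by positivity)
    rw [hLcast]; nlinarith
  have hR : ((k:ℝ)+1) * ((x + y + ((k:ℝ)+1)) / (x*y)) * B * B'
      = (((k:ℝ)+1) * (x + y + ((k:ℝ)+1)) * B * B') / (x*y) := by ring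
  rw [hR, div_le_iff₀ (by positivity)]
  have hSb : x + y + ((k:ℝ)+1) ≤ ((k:ℝ)+2) * (x+y) := by nlinarith
  calc ((k:ℝ)+1) * (x + y + ((k:ℝ)+1)) * B * B'
      ≤ ((k:ℝ)+1) * (((k:ℝ)+2) * (x+y)) * (((k:ℝ)+2)^(k+1) * x^(k+1)) * (((k:ℝ)+2)^(k+1) * y^(k+1)) := by
        gcongr
    _ = (((k:ℝ)+1) * ((k:ℝ)+2)^(2*k+3)) * ((x*y)^k * (x+y) * (x*y)) := by
        rw [mul_pow x y k, pow_succ x k, pow_succ y k]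
        rw [show 2*k+3 = (k+1) + (k+1) + 1 by ring, pow_add, pow_add, pow_one]
        ring
    _ ≤ (((k:ℝ)+1) * ((k:ℝ)+2)^(2*k+3)) * (L^k * (x+y) * (x*y)) := by
        have hc : 0 ≤ ((k:ℝ)+1) * ((k:ℝ)+2)^(2*k+3) := by positivity
        gcongr
    _ = (((k:ℝ)+1) * ((k:ℝ)+2)^(2*k+3)) * L^k * (x+y) * (x*y) := by ring


/-- The dimension `d_{ℓ,ℓ'}` of the space `𝓗^{ℓ,ℓ'}` of complex spherical harmonics of
bidegree `(ℓ,ℓ')` on `S^{2n+1}`. -/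
noncomputable def harmDim (n ℓ ℓ' : ℕ) : ℝ :=
  if ℓ = 0 then (Nat.choose (ℓ' + n) ℓ' : ℝ)
  else if ℓ' = 0 then (Nat.choose (ℓ + n) ℓ : ℝ)
  else (n : ℝ) * (((ℓ : ℝ) + ℓ' + n) / ((ℓ : ℝ) * ℓ')) *
    (Nat.choose (ℓ + n - 1) (ℓ - 1) : ℝ) * (Nat.choose (ℓ' + n - 1) (ℓ' - 1) : ℝ)

/-- For `n ≥ 1` there are constants `c, C > 0` depending only on `n` such that
`c·λ_{ℓ,ℓ'}^{n−1}(ℓ+ℓ') ≤ d_{ℓ,ℓ'} ≤ C·λ_{ℓ,ℓ'}^{n−1}(ℓ+ℓ')` for all `(ℓ,ℓ') ≠ (0,0)`,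
where `λ_{ℓ,ℓ'} = 2ℓℓ' + n(ℓ+ℓ')`. -/
theorem harmDim_comparable (n : ℕ) (hn : 1 ≤ n) :
    ∃ c C : ℝ, 0 < c ∧ 0 < C ∧ ∀ ℓ ℓ' : ℕ, (ℓ, ℓ') ≠ (0, 0) →
      c * ((2 * ℓ * ℓ' + n * (ℓ + ℓ') : ℕ) : ℝ) ^ (n - 1) * ((ℓ + ℓ' : ℕ) : ℝ)
          ≤ harmDim n ℓ ℓ' ∧
      harmDim n ℓ ℓ'
          ≤ C * ((2 * ℓ * ℓ' + n * (ℓ + ℓ') : ℕ) : ℝ) ^ (n - 1) * ((ℓ + ℓ' : ℕ) : ℝ) := by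
  obtain ⟨k, rfl⟩ : ∃ k, n = k + 1 := ⟨n - 1, by omega⟩
  set c₁ : ℝ := (((k:ℝ)+1)^k * (((k+1).factorial:ℕ):ℝ))⁻¹ with hc₁
  set c₂ : ℝ := ((k:ℝ)+1) / (((k+1).factorial:ℝ)^2 * (2^k*((k:ℝ)+2)^k)) with hc₂
  set C₁ : ℝ := 2^(k+1)*((k:ℝ)+2)^(k+1) with hC₁
  set C₂ : ℝ := ((k:ℝ)+1) * ((k:ℝ)+2)^(2*k+3) with hC₂
  have hc₁0 : 0 < c₁ := by rw [hc₁]; positivity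
  have hc₂0 : 0 < c₂ := by rw [hc₂]; positivity
  have hC₁0 : 0 < C₁ := by rw [hC₁]; positivity
  have hC₂0 : 0 < C₂ := by rw [hC₂]; positivity
  refine ⟨min c₁ c₂, max C₁ C₂, lt_min hc₁0 hc₂0, lt_of_lt_of_le hC₁0 (le_max_left _ _), ?_⟩
  intro ℓ ℓ' hne
  simp only [Nat.add_sub_cancel]
  rcases Nat.eq_zero_or_pos ℓ with h0 | h1
  · subst h0
    have hℓ' : 1 ≤ ℓ' := by
      rcases Nat.eq_zero_or_pos ℓ' with h | h
      · exact absurd (by rw [h]) hne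
      · exact h
    rw [show (2*0*ℓ' + (k+1)*(0+ℓ') : ℕ) = (k+1)*ℓ' by ring, show (0+ℓ' : ℕ) = ℓ' by ring]
    rw [show harmDim (k+1) 0 ℓ' = ((ℓ' + (k+1)).choose ℓ' : ℝ) by rw [harmDim]; simp]
    have hX : (0:ℝ) ≤ (((k+1)*ℓ' : ℕ):ℝ)^k := by positivity
    have hS : (0:ℝ) ≤ (ℓ':ℝ) := Nat.cast_nonneg _
    constructor
    · refine le_trans ?_ (axis_low k ℓ' hℓ')
      have := min_le_left c₁ c₂
      exact mul_le_mul_of_nonneg_right (mul_le_mul_of_nonneg_right (by rw [hc₁] at this ⊢; exact this) hX) hS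
    · refine le_trans (axis_high k ℓ' hℓ') ?_
      have := le_max_left C₁ C₂
      exact mul_le_mul_of_nonneg_right (mul_le_mul_of_nonneg_right (by rw [hC₁] at this ⊢; exact this) hX) hS
  · rcases Nat.eq_zero_or_pos ℓ' with h0' | h1'
    · subst h0'
      rw [show (2*ℓ*0 + (k+1)*(ℓ+0) : ℕ) = (k+1)*ℓ by ring, show (ℓ+0 : ℕ) = ℓ by ring]
      rw [show harmDim (k+1) ℓ 0 = ((ℓ + (k+1)).choose ℓ : ℝ) by
        rw [harmDim, if_neg (by omega), if_pos rfl]]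
      have hX : (0:ℝ) ≤ (((k+1)*ℓ : ℕ):ℝ)^k := by positivity
      have hS : (0:ℝ) ≤ (ℓ:ℝ) := Nat.cast_nonneg _
      constructor
      · refine le_trans ?_ (axis_low k ℓ h1)
        have := min_le_left c₁ c₂
        exact mul_le_mul_of_nonneg_right (mul_le_mul_of_nonneg_right (by rw [hc₁] at this ⊢; exact this) hX) hS
      · refine le_trans (axis_high k ℓ h1) ?_
        have := le_max_left C₁ C₂
        exact mul_le_mul_of_nonneg_right (mul_le_mul_of_nonneg_right (by rw [hC₁] at this ⊢; exact this) hX) hS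
    · have hD : harmDim (k+1) ℓ ℓ' = ((k:ℝ)+1) * (((ℓ:ℝ) + (ℓ':ℝ) + ((k:ℝ)+1)) / ((ℓ:ℝ)*(ℓ':ℝ))) *
          ((ℓ + k).choose (ℓ-1) : ℝ) * ((ℓ' + k).choose (ℓ'-1) : ℝ) := by
        rw [harmDim, if_neg (by omega), if_neg (by omega),
          show ℓ + (k+1) - 1 = ℓ + k by omega, show ℓ' + (k+1) - 1 = ℓ' + k by omega]
        push_cast
        ring
      rw [hD]
      have hX : (0:ℝ) ≤ ((2*ℓ*ℓ' + (k+1)*(ℓ+ℓ') : ℕ):ℝ)^k := by positivity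
      have hS : (0:ℝ) ≤ ((ℓ+ℓ' : ℕ):ℝ) := Nat.cast_nonneg _
      constructor
      · refine le_trans ?_ (interior_low k ℓ ℓ' h1 h1')
        have := min_le_right c₁ c₂
        exact mul_le_mul_of_nonneg_right (mul_le_mul_of_nonneg_right (by rw [hc₂] at this ⊢; exact this) hX) hS
      · refine le_trans (interior_high k ℓ ℓ' h1 h1') ?_
        have := le_max_right C₁ C₂
        exact mul_le_mul_of_nonneg_right (mul_le_mul_of_nonneg_right (by rw [hC₂] at this ⊢; exact this) hX) hS
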